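/- Let A be a two-block SBM adjacency matrix with parameters (N, p) and let i ≠ j be distinct indices. Then E[A_{ij}·(A²)_{ij}] = p·(N(1 − 2p + 2p²) − 2p²) if i and j lie in the same community, and E[A_{ij}·(A²)_{ij}] = 2(N−1)p(1−p)² if i and j lie in different communities. -/

import Mathlib

/-!
Expanding `(A²)ᵢⱼ = ∑ₖ Aᵢₖ Aₖⱼ`, the expectation is a sum over `k` of `E[Aᵢⱼ Aᵢₖ Aₖⱼ]`.
The terms `k = i` and `k = j` vanish because `A` has zero diagonal. For any other `k` the
three entries sit on three distinct edges, so they are independent and the term is the product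
of the three edge probabilities. When `i` and `j` are in the same community this product is
`p³` or `p(1-p)²` according to the community of `k`; otherwise it is always `p(1-p)²`.
Counting the `N` vertices of each community gives the two formulas.
-/

open MeasureTheory ProbabilityTheory Matrix

/-- `i` and `j` lie in the same community, where the communities of `Fin (2*N)` are
`{0, …, N-1}` and `{N, …, 2N-1}`. -/
def sameCom (N : ℕ) (i j : Fin (2 * N)) : Prop := ((i : ℕ) < N ↔ (j : ℕ) < N)

instance (N : ℕ) (i j : Fin (2 * N)) : Decidable (sameCom N i j) := by
  unfold sameCom; infer_instance

/-- The Bernoulli distribution on `ℝ` with success probability `q`: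
mass `q` at `1` and mass `1 - q` at `0`. -/
noncomputable def bernoulliReal (q : ℝ) : Measure ℝ :=
  ENNReal.ofReal q • Measure.dirac (1 : ℝ) + ENNReal.ofReal (1 - q) • Measure.dirac (0 : ℝ)

/-- `A` is a two-block SBM adjacency matrix with parameters `(N, p)` under the measure `μ`. -/
structure IsSBM {Ω : Type*} [MeasurableSpace Ω] (μ : Measure Ω) (N : ℕ) (p : ℝ)
    (A : Ω → Matrix (Fin (2 * N)) (Fin (2 * N)) ℝ) : Prop where
  isProb : IsProbabilityMeasure μ
  symm : ∀ ω, (A ω)ᵀ = A ω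
  diag : ∀ ω i, A ω i i = 0
  vals : ∀ ω i j, A ω i j = 0 ∨ A ω i j = 1
  meas : ∀ i j, Measurable fun ω => A ω i j
  indep : iIndepFun
    (fun (e : {e : Fin (2 * N) × Fin (2 * N) // e.1 < e.2}) ω => A ω e.1.1 e.1.2) μ
  bern : ∀ i j, i < j →
    μ.map (fun ω => A ω i j) = bernoulliReal (if sameCom N i j then p else 1 - p)

open Finset

lemma integral_id_bernoulliReal {q : ℝ} (hq : 0 ≤ q) : ∫ x, x ∂bernoulliReal q = q := by
  have hdirac (a : ℝ) : Integrable (fun x : ℝ => x) (Measure.dirac a) :=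
    integrable_dirac enorm_lt_top
  rw [bernoulliReal, integral_add_measure ((hdirac 1).smul_measure ENNReal.ofReal_ne_top)
    ((hdirac 0).smul_measure ENNReal.ofReal_ne_top)]
  simp [hq]

lemma ProbabilityTheory.iIndepFun.integral_mul_mul {Ω ι : Type*} [MeasurableSpace Ω]
    {μ : Measure Ω} {X : ι → Ω → ℝ} (hX : iIndepFun X μ)
    (mX : ∀ i, AEStronglyMeasurable (X i) μ) {a b c : ι} (hab : a ≠ b) (hac : a ≠ c)
    (hbc : b ≠ c) :
    ∫ ω, X a ω * (X b ω * X c ω) ∂μ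
      = (∫ ω, X a ω ∂μ) * ((∫ ω, X b ω ∂μ) * ∫ ω, X c ω ∂μ) := by
  have hinj : Function.Injective ![a, b, c] := by
    intro s t; fin_cases s <;> fin_cases t <;> simp_all [eq_comm]
  simpa [Fin.prod_univ_three, mul_assoc] using
    (hX.precomp hinj).integral_fun_prod_eq_prod_integral fun t => mX _

section SortedPair

variable {ι : Type*} [LinearOrder ι]

def sortedPair (a b : ι) (h : a ≠ b) : {e : ι × ι // e.1 < e.2} :=
  ⟨(min a b, max a b), min_lt_max.2 h⟩

lemma sortedPair_comm {a b : ι} (h : a ≠ b) : sortedPair a b h = sortedPair b a h.symm :=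
  Subtype.ext (Prod.ext (min_comm a b) (max_comm a b))

lemma eq_or_eq_of_sortedPair_eq {a b c d : ι} {h : a ≠ b} {h' : c ≠ d}
    (he : sortedPair a b h = sortedPair c d h') : a = c ∨ a = d := by
  have hmin : min a b = min c d := congrArg (·.1.1) he
  have hmax : max a b = max c d := congrArg (·.1.2) he
  rcases le_total a b with hle | hle
  · rw [min_eq_left hle] at hmin; rw [hmin]; exact min_choice c d
  · rw [max_eq_left hle] at hmax; rw [hmax]; exact max_choice c d

lemma Matrix.IsSymm.apply_sortedPair {α : Type*} {M : Matrix ι ι α} (hM : M.IsSymm) {a b : ι}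
    (h : a ≠ b) : M (sortedPair a b h).1.1 (sortedPair a b h).1.2 = M a b := by
  rcases le_total a b with hle | hle
  · simp [sortedPair, hle]
  · simp [sortedPair, hle, hM.apply]

end SortedPair

noncomputable def edgeProb (N : ℕ) (p : ℝ) (a b : Fin (2 * N)) : ℝ :=
  if sameCom N a b then p else 1 - p

lemma edgeProb_comm (N : ℕ) (p : ℝ) (a b : Fin (2 * N)) : edgeProb N p a b = edgeProb N p b a :=
  if_congr Iff.comm rfl rfl

lemma edgeProb_self (N : ℕ) (p : ℝ) (a : Fin (2 * N)) : edgeProb N p a a = p :=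
  if_pos Iff.rfl

lemma edgeProb_nonneg (N : ℕ) {p : ℝ} (hp0 : 0 ≤ p) (hp1 : p ≤ 1) (a b : Fin (2 * N)) :
    0 ≤ edgeProb N p a b := by
  unfold edgeProb; split_ifs <;> linarith

lemma edgeProb_mul_edgeProb_of_sameCom {N : ℕ} (p : ℝ) {i j : Fin (2 * N)} (h : sameCom N i j)
    (k : Fin (2 * N)) :
    edgeProb N p i k * edgeProb N p k j = if sameCom N i k then p ^ 2 else (1 - p) ^ 2 := by
  unfold edgeProb
  by_cases hik : sameCom N i k <;> by_cases hkj : sameCom N k j <;>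
    simp only [hik, hkj, if_true, if_false] <;> unfold sameCom at * <;>
    first | (exfalso; tauto) | ring

lemma edgeProb_mul_edgeProb_of_not_sameCom {N : ℕ} (p : ℝ) {i j : Fin (2 * N)}
    (h : ¬ sameCom N i j) (k : Fin (2 * N)) :
    edgeProb N p i k * edgeProb N p k j = p * (1 - p) := by
  unfold edgeProb
  by_cases hik : sameCom N i k <;> by_cases hkj : sameCom N k j <;>
    simp only [hik, hkj, if_true, if_false] <;> unfold sameCom at * <;>
    first | (exfalso; tauto) | ring

lemma card_filter_sameCom {N : ℕ} (i : Fin (2 * N)) :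
    (univ.filter (sameCom N i)).card = N := by
  set low := univ.filter fun k : Fin (2 * N) => (k : ℕ) < N
  have hlow : low.card = N := by
    rw [Fin.card_filter_val_lt]; omega
  have hhigh := card_filter_add_card_filter_not (s := univ) fun k : Fin (2 * N) => (k : ℕ) < N
  rw [hlow, card_univ, Fintype.card_fin] at hhigh
  by_cases hi : (i : ℕ) < N
  · rw [show univ.filter (sameCom N i) = low by ext k; simp [low, sameCom, hi]]
    exact hlow
  · rw [show univ.filter (sameCom N i) = univ.filter (fun k : Fin (2 * N) => ¬ (k : ℕ) < N) by
      ext k; simp [sameCom, hi]]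
    omega

lemma sum_ite_sameCom {N : ℕ} (i : Fin (2 * N)) (x y : ℝ) :
    ∑ k, (if sameCom N i k then x else y) = N * x + N * y := by
  have hcompl := card_filter_add_card_filter_not (s := univ) (sameCom N i)
  rw [card_univ, Fintype.card_fin, card_filter_sameCom] at hcompl
  rw [sum_ite, sum_const, sum_const, card_filter_sameCom,
    show (univ.filter fun k => ¬ sameCom N i k).card = N by omega, nsmul_eq_mul,
    nsmul_eq_mul]

namespace IsSBM

variable {Ω : Type*} [MeasurableSpace Ω] {μ : Measure Ω} {N : ℕ} {p : ℝ}
  {A : Ω → Matrix (Fin (2 * N)) (Fin (2 * N)) ℝ}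

lemma isSymm (hA : IsSBM μ N p A) (ω : Ω) : (A ω).IsSymm := hA.symm ω

lemma apply_sortedPair (hA : IsSBM μ N p A) (ω : Ω) {a b : Fin (2 * N)} (h : a ≠ b) :
    A ω (sortedPair a b h).1.1 (sortedPair a b h).1.2 = A ω a b :=
  (hA.isSymm ω).apply_sortedPair h

lemma norm_apply_le_one (hA : IsSBM μ N p A) (ω : Ω) (a b : Fin (2 * N)) :
    ‖A ω a b‖ ≤ 1 := by
  rcases hA.vals ω a b with h | h <;> simp [h]

lemma map_apply (hA : IsSBM μ N p A) {a b : Fin (2 * N)} (hab : a ≠ b) :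
    μ.map (fun ω => A ω a b) = bernoulliReal (edgeProb N p a b) := by
  rcases hab.lt_or_gt with h | h
  · exact hA.bern a b h
  · simp_rw [← (hA.isSymm _).apply a b]
    rw [edgeProb_comm]
    exact hA.bern b a h

lemma integral_apply (hA : IsSBM μ N p A) (hp0 : 0 ≤ p) (hp1 : p ≤ 1) {a b : Fin (2 * N)}
    (hab : a ≠ b) : ∫ ω, A ω a b ∂μ = edgeProb N p a b := by
  rw [← integral_map (f := fun x => x) (hA.meas a b).aemeasurable aestronglyMeasurable_id,
    hA.map_apply hab, integral_id_bernoulliReal (edgeProb_nonneg N hp0 hp1 a b)]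

lemma integral_triangle (hA : IsSBM μ N p A) (hp0 : 0 ≤ p) (hp1 : p ≤ 1)
    {a b c : Fin (2 * N)} (hab : a ≠ b) (hac : a ≠ c) (hbc : b ≠ c) :
    ∫ ω, A ω a b * (A ω a c * A ω c b) ∂μ
      = edgeProb N p a b * (edgeProb N p a c * edgeProb N p c b) := by
  have h12 : sortedPair a b hab ≠ sortedPair a c hac := fun he => by
    rw [sortedPair_comm] at he
    exact (eq_or_eq_of_sortedPair_eq he).elim hab.symm hbc
  have h13 : sortedPair a b hab ≠ sortedPair c b hbc.symm := fun he =>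
    (eq_or_eq_of_sortedPair_eq he).elim hac hab
  have h23 : sortedPair a c hac ≠ sortedPair c b hbc.symm := fun he =>
    (eq_or_eq_of_sortedPair_eq he).elim hac hab
  have hindep := hA.indep.integral_mul_mul (fun e => (hA.meas _ _).aestronglyMeasurable)
    h12 h13 h23
  simp only [hA.apply_sortedPair] at hindep
  rw [hindep, hA.integral_apply hp0 hp1 hab, hA.integral_apply hp0 hp1 hac,
    hA.integral_apply hp0 hp1 hbc.symm]

lemma integral_mul_sq_apply (hA : IsSBM μ N p A) (hp0 : 0 ≤ p) (hp1 : p ≤ 1)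
    {i j : Fin (2 * N)} (hij : i ≠ j) :
    ∫ ω, A ω i j * (A ω ^ 2) i j ∂μ
      = edgeProb N p i j *
          (∑ k, edgeProb N p i k * edgeProb N p k j - 2 * p * edgeProb N p i j) := by
  have := hA.isProb
  have hintegrable (k : Fin (2 * N)) :
      Integrable (fun ω => A ω i j * (A ω i k * A ω k j)) μ := by
    refine .of_bound ((hA.meas i j).mul ((hA.meas i k).mul (hA.meas k j))).aestronglyMeasurable
      1 (ae_of_all _ fun ω => ?_)
    rw [norm_mul, norm_mul]
    exact mul_le_one₀ (hA.norm_apply_le_one ω i j) (by positivity)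
      (mul_le_one₀ (hA.norm_apply_le_one ω i k) (by positivity) (hA.norm_apply_le_one ω k j))
  calc ∫ ω, A ω i j * (A ω ^ 2) i j ∂μ
      = ∑ k, ∫ ω, A ω i j * (A ω i k * A ω k j) ∂μ := by
        simp_rw [sq, mul_apply, mul_sum]
        exact integral_finsetSum _ fun k _ => hintegrable k
    _ = ∑ k ∈ (univ.erase i).erase j, ∫ ω, A ω i j * (A ω i k * A ω k j) ∂μ := by
        rw [sum_erase _ (by simp [hA.diag]), sum_erase _ (by simp [hA.diag])]
    _ = ∑ k ∈ (univ.erase i).erase j,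
          edgeProb N p i j * (edgeProb N p i k * edgeProb N p k j) := by
        refine sum_congr rfl fun k hk => ?_
        obtain ⟨hkj, hki⟩ : k ≠ j ∧ k ≠ i := by simpa using hk
        exact hA.integral_triangle hp0 hp1 hij hki.symm hkj.symm
    _ = _ := by
        rw [sum_erase_eq_sub (by simp [hij.symm]), sum_erase_eq_sub (by simp),
          ← mul_sum, edgeProb_self, edgeProb_self]
        ring

end IsSBM

theorem stmt12_general {Ω : Type*} [MeasurableSpace Ω] (μ : Measure Ω) (N : ℕ)
    (p : ℝ) (hp : 1 / 2 < p) (hp1 : p ≤ 1)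
    (A : Ω → Matrix (Fin (2 * N)) (Fin (2 * N)) ℝ) (hA : IsSBM μ N p A)
    (i j : Fin (2 * N)) (hij : i ≠ j) :
    (sameCom N i j →
      (∫ ω, A ω i j * ((A ω) ^ 2) i j ∂μ) =
        p * ((N : ℝ) * (1 - 2 * p + 2 * p ^ 2) - 2 * p ^ 2)) ∧
    (¬ sameCom N i j →
      (∫ ω, A ω i j * ((A ω) ^ 2) i j ∂μ) = 2 * ((N : ℝ) - 1) * p * (1 - p) ^ 2) := by
  rw [hA.integral_mul_sq_apply (by linarith) hp1 hij]
  refine ⟨fun hsame => ?_, fun hdiff => ?_⟩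
  · rw [sum_congr rfl fun k _ => edgeProb_mul_edgeProb_of_sameCom p hsame k,
      sum_ite_sameCom, edgeProb, if_pos hsame]
    ring
  · rw [sum_congr rfl fun k _ => edgeProb_mul_edgeProb_of_not_sameCom p hdiff k,
      sum_const, card_univ, Fintype.card_fin, nsmul_eq_mul, edgeProb, if_neg hdiff]
    push_cast
    ring

theorem stmt12 {Ω : Type*} [MeasurableSpace Ω] (μ : Measure Ω) (N : ℕ) (hN : 1 ≤ N)
    (p : ℝ) (hp : 1 / 2 < p) (hp1 : p ≤ 1)
    (A : Ω → Matrix (Fin (2 * N)) (Fin (2 * N)) ℝ) (hA : IsSBM μ N p A)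
    (i j : Fin (2 * N)) (hij : i ≠ j) :
    (sameCom N i j →
      (∫ ω, A ω i j * ((A ω) ^ 2) i j ∂μ) =
        p * ((N : ℝ) * (1 - 2 * p + 2 * p ^ 2) - 2 * p ^ 2)) ∧
    (¬ sameCom N i j →
      (∫ ω, A ω i j * ((A ω) ^ 2) i j ∂μ) = 2 * ((N : ℝ) - 1) * p * (1 - p) ^ 2) :=
  stmt12_general μ N p hp hp1 A hA i j hij
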